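/- arXiv:1409.1666 — 5 statements merged into one kernel-verified Lean document; each statement's English description precedes it below -/
import Mathlib

section
/- Let G be an A×B matrix over F_q with A ≥ 2 and full row rank, and let f be any function from F_q^B to a set R with |R| < q^2. Then there exist messages m_a ≠ m_b in F_q^B with Hamming distance d_H(m_a, m_b) ≤ 2, f(m_a) = f(m_b), and G·m_a ≠ G·m_b. -/
/-- For any full-row-rank matrix G with at least 2 rows, and any function f whose range
has fewer than q^2 elements, there are two distinct messages at Hamming distance at
most 2 with the same f-value but distinct encodings at the stale node. -/
theorem stmt2 (F : Type*) [Field F] [Fintype F] [DecidableEq F] (A B : ℕ)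
    (hA : 2 ≤ A) (hAB : A ≤ B)
    (G : Matrix (Fin A) (Fin B) F) (hG : LinearIndependent F G)
    (R : Type*) [Fintype R] (hR : Fintype.card R < Fintype.card F ^ 2)
    (f : (Fin B → F) → R) :
    ∃ ma mb : Fin B → F, ma ≠ mb ∧ hammingDist ma mb ≤ 2 ∧ f ma = f mb ∧
      G.mulVec ma ≠ G.mulVec mb := by
  classical
  have hA0 : 0 < A := by omega
  have hA1 : 1 < A := by omega
  set i0 : Fin A := ⟨0, hA0⟩ with hi0
  set i1 : Fin A := ⟨1, hA1⟩ with hi1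
  have hi : i0 ≠ i1 := by simp [hi0, hi1, Fin.ext_iff]
  -- rows are not proportional
  have hrow : ∀ c : F, G i1 ≠ c • G i0 := by
    intro c hc
    have hsum : ∑ i, (fun i => if i = i1 then (-1 : F) else if i = i0 then c else 0) i • G i
        = 0 := by
      rw [Finset.sum_eq_add_of_mem i0 i1 (Finset.mem_univ _) (Finset.mem_univ _) hi]
      · simp [hi.symm, hi, hc]
      · intro d _ hd
        simp [hd.1, hd.2]
    have := Fintype.linearIndependent_iff.mp hG _ hsum i1
    simp at this
  -- first row is nonzero
  have h0 : G i0 ≠ 0 := hG.ne_zero i0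
  obtain ⟨j, hj⟩ : ∃ j, G i0 j ≠ 0 := by
    by_contra h
    push_neg at h
    exact h0 (funext h)
  obtain ⟨k, hdet⟩ : ∃ k, G i0 j * G i1 k - G i0 k * G i1 j ≠ 0 := by
    by_contra h
    push_neg at h
    apply hrow (G i1 j / G i0 j)
    funext b
    have hb := h b
    have : G i0 j * G i1 b = G i0 b * G i1 j := by linear_combination hb
    show G i1 b = (G i1 j / G i0 j) * G i0 b
    field_simp
    linear_combination this
  have hjk : j ≠ k := by
    rintro rfl
    exact hdet (by ring)
  -- the two-coordinate perturbation family
  set m : F × F → (Fin B → F) := fun p b => if b = j then p.1 else if b = k then p.2 else 0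
    with hm
  have hcard : Fintype.card R < Fintype.card (F × F) := by
    simpa [Fintype.card_prod, sq] using hR
  obtain ⟨p, p', hpp, hfp⟩ := Fintype.exists_ne_map_eq_of_card_lt (fun p => f (m p)) hcard
  have hmj : ∀ p : F × F, m p j = p.1 := by intro p; simp [hm]
  have hmk : ∀ p : F × F, m p k = p.2 := by intro p; simp [hm, hjk.symm]
  have hmv : ∀ (i : Fin A) (p : F × F), G.mulVec (m p) i = G i j * p.1 + G i k * p.2 := by
    intro i p
    show ∑ b, G i b * m p b = _
    rw [Finset.sum_eq_add_of_mem j k (Finset.mem_univ _) (Finset.mem_univ _) hjk]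
    · rw [hmj, hmk]
    · intro b _ hb
      simp [hm, hb.1, hb.2]
  refine ⟨m p, m p', ?_, ?_, hfp, ?_⟩
  · intro h
    apply hpp
    have h1 : p.1 = p'.1 := by rw [← hmj p, ← hmj p', h]
    have h2 : p.2 = p'.2 := by rw [← hmk p, ← hmk p', h]
    exact Prod.ext h1 h2
  · have hsub : ({i | m p i ≠ m p' i} : Finset (Fin B)) ⊆ {j, k} := by
      intro b hb
      simp only [Finset.mem_filter, Finset.mem_univ, true_and] at hb
      by_contra hbm
      simp only [Finset.mem_insert, Finset.mem_singleton, not_or] at hbm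
      exact hb (by simp [hm, hbm.1, hbm.2])
    calc hammingDist (m p) (m p') ≤ ({j, k} : Finset (Fin B)).card :=
          Finset.card_le_card hsub
      _ ≤ 2 := Finset.card_insert_le _ _ |>.trans (by simp)
  · intro h
    apply hpp
    have e0 : G i0 j * p.1 + G i0 k * p.2 = G i0 j * p'.1 + G i0 k * p'.2 := by
      rw [← hmv i0 p, ← hmv i0 p', h]
    have e1 : G i1 j * p.1 + G i1 k * p.2 = G i1 j * p'.1 + G i1 k * p'.2 := by
      rw [← hmv i1 p, ← hmv i1 p', h]
    have h1 : (G i0 j * G i1 k - G i0 k * G i1 j) * (p.1 - p'.1) = 0 := by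
      linear_combination G i1 k * e0 - G i0 k * e1
    have h2 : (G i0 j * G i1 k - G i0 k * G i1 j) * (p.2 - p'.2) = 0 := by
      linear_combination G i0 j * e1 - G i1 j * e0
    have h1' : p.1 = p'.1 := by
      rcases mul_eq_zero.mp h1 with h | h
      · exact absurd h hdet
      · exact sub_eq_zero.mp h
    have h2' : p.2 = p'.2 := by
      rcases mul_eq_zero.mp h2 with h | h
      · exact absurd h hdet
      · exact sub_eq_zero.mp h
    exact Prod.ext h1' h2'
end

section
/- (Lower bound for oblivious update under any linear code.) Suppose a stale node stores G·m for a full-row-rank A×B matrix G over F_q with A ≥ 2, knows m, and receives f(m') from an updated node for some function f : F_q^B → R, where m' satisfies d_H(m,m') ≤ 1. If there exists a decoding function D such that D(m, f(m')) = G·m' for all such pairs (m, m'), then |R| ≥ q^2. -/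
/-!
Pick two linearly independent columns `j, k` of `G` (they exist because the columns span a space
of dimension `A ≥ 2`) and look at the `q²` messages `v(a, b) = a eⱼ + b eₖ`. Any two of them,
`v(a, b)` and `v(a', b')`, are within Hamming distance one of the common stale message `v(a, b')`.
So if `f` took the same value on both, the decoder fed with that stale message would return the
same codeword for both, although `G v(a, b) = a Gⱼ + b Gₖ` determines `(a, b)`. Hence `f` is
injective on these `q²` messages.
-/

open Matrix Module Submodule

theorem exists_linearIndependent_pair_of_two_le_finrank_span {K V ι : Type*} [DivisionRing K]
    [AddCommGroup V] [Module K V] (v : ι → V) (h : 2 ≤ finrank K (span K (Set.range v))) :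
    ∃ j k, LinearIndependent K ![v j, v k] := by
  by_contra! hdep
  obtain ⟨_, ⟨j, rfl⟩, hj⟩ : ∃ x ∈ Set.range v, x ≠ 0 := by
    by_contra! hzero
    rw [span_eq_bot.mpr hzero, finrank_bot] at h
    omega
  have hle : span K (Set.range v) ≤ K ∙ v j := by
    rw [span_le]
    rintro _ ⟨k, rfl⟩
    obtain ⟨a, ha⟩ : ∃ a : K, a • v j = v k := by
      simpa [linearIndependent_fin2, hj] using hdep k j
    exact ha ▸ smul_mem _ a (mem_span_singleton_self _)
  have := (Submodule.finrank_mono hle).trans_eq (finrank_span_singleton hj)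
  omega

theorem Matrix.exists_linearIndependent_cols_pair {K : Type*} [Field K] {m n : Type*} [Fintype m]
    [Fintype n] (G : Matrix m n K) (hG : LinearIndependent K G.row) (hm : 2 ≤ Fintype.card m) :
    ∃ j k, LinearIndependent K ![G.col j, G.col k] := by
  refine exists_linearIndependent_pair_of_two_le_finrank_span G.col ?_
  rwa [← rank_eq_finrank_span_cols, hG.rank_matrix]

theorem Matrix.injective_mulVec_single_add_single {K : Type*} [CommRing K] {m n : Type*}
    [Fintype n] [DecidableEq n] (G : Matrix m n K) {j k : n}
    (hjk : LinearIndependent K ![G.col j, G.col k]) :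
    Function.Injective fun p : K × K ↦ G *ᵥ (Pi.single j p.1 + Pi.single k p.2) := by
  rintro ⟨a, b⟩ ⟨a', b'⟩ h
  have h' : (a - a') • G.col j + (b - b') • G.col k = 0 := by
    ext i
    have hi := congrFun h i
    simp only [mulVec_add, mulVec_single] at hi
    simp only [Pi.add_apply, Pi.smul_apply, col_apply, smul_eq_mul, Pi.zero_apply,
      MulOpposite.smul_eq_mul_unop, MulOpposite.unop_op] at hi ⊢
    linear_combination hi
  obtain ⟨ha, hb⟩ := LinearIndependent.pair_iff.mp hjk _ _ h'
  rw [sub_eq_zero] at ha hb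
  rw [ha, hb]

theorem hammingDist_add_single_le_one {ι β : Type*} [Fintype ι] [DecidableEq ι] [AddZeroClass β]
    [DecidableEq β] (x : ι → β) (k : ι) (b b' : β) :
    hammingDist (x + Pi.single k b) (x + Pi.single k b') ≤ 1 := by
  refine (Finset.card_le_card fun i hi ↦ ?_).trans (Finset.card_singleton k).le
  by_contra hik
  simp_all [Pi.single_eq_of_ne (Finset.mem_singleton.not.mp hik)]

theorem injOn_of_decodable {ι β R C : Type*} [Fintype ι] [DecidableEq β] {f : (ι → β) → R}
    {g : (ι → β) → C} {D : (ι → β) → R → C}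
    (hD : ∀ m m', hammingDist m m' ≤ 1 → D m (f m') = g m') {S : Set (ι → β)} (hg : S.InjOn g)
    (hS : ∀ x ∈ S, ∀ y ∈ S, ∃ m, hammingDist m x ≤ 1 ∧ hammingDist m y ≤ 1) : S.InjOn f := by
  intro x hx y hy hxy
  obtain ⟨m, hmx, hmy⟩ := hS x hx y hy
  exact hg hx hy (by rw [← hD m x hmx, ← hD m y hmy, hxy])

theorem stmt3_general (F : Type*) [Field F] [Fintype F] [DecidableEq F] (A B : ℕ)
    (hA : 2 ≤ A)
    (G : Matrix (Fin A) (Fin B) F) (hG : LinearIndependent F G)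
    (R : Type*) [Fintype R]
    (f : (Fin B → F) → R) (D : (Fin B → F) → R → (Fin A → F))
    (hD : ∀ m m' : Fin B → F, hammingDist m m' ≤ 1 → D m (f m') = G.mulVec m') :
    Fintype.card F ^ 2 ≤ Fintype.card R := by
  obtain ⟨j, k, hjk⟩ := G.exists_linearIndependent_cols_pair hG (by simpa using hA)
  let v : F × F → Fin B → F := fun p ↦ Pi.single j p.1 + Pi.single k p.2
  have hGv : (G.mulVec ∘ v).Injective := G.injective_mulVec_single_add_single hjk
  have hf : Set.InjOn f (Set.range v) := by
    refine injOn_of_decodable hD ?_ ?_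
    · rintro _ ⟨p, rfl⟩ _ ⟨p', rfl⟩ h
      rw [hGv h]
    · rintro _ ⟨⟨a, b⟩, rfl⟩ _ ⟨⟨a', b'⟩, rfl⟩
      refine ⟨v (a, b'), hammingDist_add_single_le_one _ _ _ _, ?_⟩
      simpa only [v, add_comm (Pi.single j _)] using
        hammingDist_add_single_le_one (Pi.single k b') j a a'
  calc Fintype.card F ^ 2 = Fintype.card (F × F) := by rw [Fintype.card_prod, sq]
    _ ≤ Fintype.card R := Fintype.card_le_of_injective (f ∘ v)
      fun p p' h ↦ hGv.of_comp (hf (Set.mem_range_self p) (Set.mem_range_self p') h)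

/-- Lower bound for oblivious update under any linear code: if a decoder can always
recover G·m' from the stale message m and a single downloaded symbol f(m'), then the
range of f has size at least q^2. -/
theorem stmt3 (F : Type*) [Field F] [Fintype F] [DecidableEq F] (A B : ℕ)
    (hA : 2 ≤ A) (hAB : A ≤ B)
    (G : Matrix (Fin A) (Fin B) F) (hG : LinearIndependent F G)
    (R : Type*) [Fintype R]
    (f : (Fin B → F) → R) (D : (Fin B → F) → R → (Fin A → F))
    (hD : ∀ m m' : Fin B → F, hammingDist m m' ≤ 1 → D m (f m') = G.mulVec m') :
    Fintype.card F ^ 2 ≤ Fintype.card R :=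
  stmt3_general F A B hA G hG R f D hD
end

section
/- Under an MDS linear code storing B symbols over n nodes with each node storing A = B/k symbols, the data held by any k−1 updated nodes together with the stale node's data determines a unique message consistent with it; consequently, a stale node contacting only k−1 updated nodes cannot always correctly perform an oblivious update when one symbol may have changed. -/
/-!
Since `s ∉ S` and `#S = k - 1`, the nodes `insert s S` are `k` nodes, so by the MDS property the
joint read-out `m ↦ (G s *ᵥ m, (G i *ᵥ m)_{i ∈ S})` is injective; both sides have `q ^ (k * A)`
elements, so it is a bijection, which is the uniqueness claim.

For a vector `e` of Hamming weight at most one, bijectivity gives `m₀` with `G s *ᵥ m₀ = 0` and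
`G i *ᵥ m₀ = -(G i *ᵥ e)` for `i ∈ S`. The updates `0 ↦ 0` and `m₀ ↦ m₀ + e` present the protocol
with the same input `(0, 0)` but require the outputs `0` and `G s *ᵥ e`. So `G s` kills every unit
vector, i.e. `G s = 0`, which contradicts the surjectivity of the read-out.
-/

open Function Matrix

section

variable {F ι α β : Type*}

section Readout

variable [NonUnitalNonAssocSemiring F] [Fintype β]

def staleReadout (G : ι → Matrix α β F) (s : ι) (S : Finset ι) (m : β → F) :
    (α → F) × (S → α → F) :=
  (G s *ᵥ m, fun i => G i *ᵥ m)

theorem staleReadout_eq_iff {G : ι → Matrix α β F} {s : ι} {S : Finset ι} {m₀ m m' : β → F} :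
    staleReadout G s S m₀ = (G s *ᵥ m, fun i : S => G i *ᵥ m') ↔
      G s *ᵥ m₀ = G s *ᵥ m ∧ ∀ i ∈ S, G i *ᵥ m₀ = G i *ᵥ m' := by
  simp [staleReadout, funext_iff]

theorem staleReadout_injective [DecidableEq ι] {G : ι → Matrix α β F} {s : ι} {S : Finset ι}
    (hG : ∀ m₁ m₂ : β → F, (∀ i ∈ insert s S, G i *ᵥ m₁ = G i *ᵥ m₂) → m₁ = m₂) :
    Injective (staleReadout G s S) := by
  intro m₁ m₂ h
  refine hG m₁ m₂ fun i hi => ?_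
  rcases Finset.mem_insert.1 hi with rfl | hi
  · exact congrArg Prod.fst h
  · exact congrFun (congrArg Prod.snd h) ⟨i, hi⟩

end Readout

theorem card_fun_fin_eq_card_prod [Fintype F] [DecidableEq ι] {k A B : ℕ} (hB : B = k * A)
    (hk : 1 ≤ k) (S : Finset ι) (hS : S.card = k - 1) :
    Fintype.card (Fin B → F) = Fintype.card ((Fin A → F) × (S → Fin A → F)) := by
  obtain ⟨k, rfl⟩ := Nat.exists_eq_add_of_le' hk
  simp only [Fintype.card_prod, Fintype.card_fun, Fintype.card_fin, Fintype.card_coe, hS, hB,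
    ← pow_mul, ← pow_add]
  congr 1
  simp only [Nat.add_sub_cancel]
  ring

theorem hammingNorm_single_le_one [Fintype β] [DecidableEq β] [Zero F] [DecidableEq F]
    (j : β) (x : F) : hammingNorm (Pi.single j x : β → F) ≤ 1 :=
  (Finset.card_le_card fun i hi => Finset.mem_singleton.2 <| by
    by_contra hij
    exact (Finset.mem_filter.1 hi).2 (by rw [Pi.single_eq_of_ne hij])).trans
    (Finset.card_singleton j).le

section Protocol

variable [Ring F] [DecidableEq F] [Fintype β]

def IsUpdateProtocol (G : ι → Matrix α β F) (s : ι) (S : Finset ι)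
    (D : (α → F) → (S → α → F) → α → F) : Prop :=
  ∀ m m' : β → F, hammingDist m m' ≤ 1 →
    D (G s *ᵥ m) (fun i => G i.1 *ᵥ m') = G s *ᵥ m'

theorem IsUpdateProtocol.mulVec_eq_zero {G : ι → Matrix α β F} {s : ι} {S : Finset ι}
    {D : (α → F) → (S → α → F) → α → F} (hD : IsUpdateProtocol G s S D)
    (hsurj : Surjective (staleReadout G s S)) {e : β → F} (he : hammingNorm e ≤ 1) :
    G s *ᵥ e = 0 := by
  obtain ⟨m₀, hm₀⟩ := hsurj (G s *ᵥ 0, fun i : S => G i *ᵥ -e)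
  obtain ⟨hm₀s, hm₀S⟩ := staleReadout_eq_iff.1 hm₀
  have hdist : hammingDist m₀ (m₀ + e) ≤ 1 := by
    rwa [hammingDist_eq_hammingNorm, neg_add_cancel_left]
  have hS : (fun i : S => G i.1 *ᵥ (m₀ + e)) = fun i => G i.1 *ᵥ 0 := by
    funext i
    rw [mulVec_add, hm₀S i i.2, mulVec_neg, neg_add_cancel, mulVec_zero]
  have h := hD m₀ (m₀ + e) hdist
  rwa [hm₀s, hS, hD 0 0 (by simp), mulVec_add, hm₀s, mulVec_zero, zero_add, eq_comm] at h

theorem IsUpdateProtocol.eq_zero [DecidableEq β] {G : ι → Matrix α β F} {s : ι} {S : Finset ι}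
    {D : (α → F) → (S → α → F) → α → F} (hD : IsUpdateProtocol G s S D)
    (hsurj : Surjective (staleReadout G s S)) : G s = 0 := by
  ext r j
  simpa [mulVec_single_one] using
    congrFun (hD.mulVec_eq_zero hsurj (hammingNorm_single_le_one j 1)) r

theorem not_isUpdateProtocol [DecidableEq β] [Nontrivial F] [Nonempty α]
    {G : ι → Matrix α β F} {s : ι} {S : Finset ι} (hsurj : Surjective (staleReadout G s S))
    (D : (α → F) → (S → α → F) → α → F) : ¬ IsUpdateProtocol G s S D := by
  intro hD
  obtain ⟨m, hm⟩ := hsurj (1, 0)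
  have h1 : G s *ᵥ m = 1 := congrArg Prod.fst hm
  rw [hD.eq_zero hsurj, zero_mulVec] at h1
  exact zero_ne_one h1

end Protocol

end

theorem stmt7_general (F : Type*) [Field F] [Fintype F] [DecidableEq F]
    (n k A B : ℕ) (hB : B = k * A) (hA : 1 ≤ A) (hk1 : 1 ≤ k)
    (G : Fin n → Matrix (Fin A) (Fin B) F)
    (hMDS : ∀ S : Finset (Fin n), S.card = k → ∀ m₁ m₂ : Fin B → F,
      (∀ i ∈ S, (G i).mulVec m₁ = (G i).mulVec m₂) → m₁ = m₂)
    (s : Fin n) (S : Finset (Fin n)) (hS : S.card = k - 1) (hsS : s ∉ S) :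
    (∀ m m' : Fin B → F, ∃! m₀ : Fin B → F,
        (G s).mulVec m₀ = (G s).mulVec m ∧ ∀ i ∈ S, (G i).mulVec m₀ = (G i).mulVec m') ∧
    ¬ ∃ D : (Fin A → F) → ({i // i ∈ S} → (Fin A → F)) → (Fin A → F),
        ∀ m m' : Fin B → F, hammingDist m m' ≤ 1 →
          D ((G s).mulVec m) (fun i => (G i.1).mulVec m') = (G s).mulVec m' := by
  have hcard : (insert s S).card = k := by
    rw [Finset.card_insert_of_notMem hsS, hS]; omega
  have hbij : Bijective (staleReadout G s S) :=
    (Fintype.bijective_iff_injective_and_card _).2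
      ⟨staleReadout_injective (hMDS _ hcard), card_fun_fin_eq_card_prod hB hk1 S hS⟩
  have : Nonempty (Fin A) := ⟨⟨0, hA⟩⟩
  refine ⟨fun m m' => ?_, fun ⟨D, hD⟩ => not_isUpdateProtocol hbij.2 D hD⟩
  simpa only [staleReadout_eq_iff] using hbij.existsUnique (G s *ᵥ m, fun i : S => G i *ᵥ m')

/-- For an MDS linear code: (i) the data of any k-1 updated nodes together with the
stale node's data is consistent with a unique message, and (ii) consequently no
update protocol contacting only k-1 updated nodes can always correctly produce the
stale node's updated data when at most one message symbol may have changed. -/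
theorem stmt7 (F : Type*) [Field F] [Fintype F] [DecidableEq F]
    (n k A B : ℕ) (hB : B = k * A) (hA : 1 ≤ A) (hk1 : 1 ≤ k) (hk : k ≤ n)
    (G : Fin n → Matrix (Fin A) (Fin B) F)
    (hMDS : ∀ S : Finset (Fin n), S.card = k → ∀ m₁ m₂ : Fin B → F,
      (∀ i ∈ S, (G i).mulVec m₁ = (G i).mulVec m₂) → m₁ = m₂)
    (s : Fin n) (S : Finset (Fin n)) (hS : S.card = k - 1) (hsS : s ∉ S) :
    (∀ m m' : Fin B → F, ∃! m₀ : Fin B → F,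
        (G s).mulVec m₀ = (G s).mulVec m ∧ ∀ i ∈ S, (G i).mulVec m₀ = (G i).mulVec m') ∧
    ¬ ∃ D : (Fin A → F) → ({i // i ∈ S} → (Fin A → F)) → (Fin A → F),
        ∀ m m' : Fin B → F, hammingDist m m' ≤ 1 →
          D ((G s).mulVec m) (fun i => (G i.1).mulVec m') = (G s).mulVec m' :=
  stmt7_general F n k A B hB hA hk1 G hMDS s S hS hsS
end

section
/- (Correctness of the MDS oblivious update.) Let Γ ∈ F_q^{(nA)×B} with every square submatrix invertible, B = kA, and nodes storing Γ_ℓ·m. Suppose the stale node s knows Γ_s·m and receives, from k updated nodes u_1,...,u_k, the 2k symbols ξ_ℓ^{(i)ᵀ} Γ_{u_ℓ} m' for i ∈ {1,2}, ℓ ∈ [k], where [ξ_1^{(i)ᵀ} ... ξ_k^{(i)ᵀ}] = Γ_s^{(i)} · [Γ_{u_1}; ...; Γ_{u_k}]^{−1} and Γ_s^{(i)} is the i-th row of Γ_s. If d_H(m, m') ≤ 1, then the stale node can determine Γ_s·m' from Γ_s·m and these 2k received symbols. -/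
open Matrix

/-- Correctness of the MDS oblivious update: from its stale data and the 2k received
symbols ξ_ℓ^{(i)ᵀ} Γ_{u_ℓ} m' (where the ξ's satisfy their defining relation with
respect to the invertible stacked matrix of the k contacted nodes), the stale node can
determine its updated data, whenever at most one message symbol has changed. -/
theorem stmt12 (F : Type*) [Field F] [Fintype F] [DecidableEq F]
    (n k A B : ℕ) (hB : B = k * A) (hA : 2 ≤ A) (hk : k ≤ n)
    (Γ : Matrix (Fin n × Fin A) (Fin B) F)
    (hsub : ∀ (r : ℕ) (rows : Fin r → Fin n × Fin A) (cols : Fin r → Fin B),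
      Function.Injective rows → Function.Injective cols →
      (Γ.submatrix rows cols).det ≠ 0)
    (s : Fin n) (u : Fin k → Fin n) (hu : Function.Injective u)
    (hstack : Function.Bijective
      (fun m : Fin B → F => fun p : Fin k × Fin A => Γ (u p.1, p.2) ⬝ᵥ m))
    (ξ : Fin 2 → Fin k → Fin A → F)
    (hξ : ∀ i : Fin 2, ∀ j : Fin B,
      (∑ ℓ : Fin k, ∑ a : Fin A, ξ i ℓ a * Γ (u ℓ, a) j) = Γ (s, Fin.castLE hA i) j) :
    ∃ D : (Fin A → F) → (Fin 2 → Fin k → F) → (Fin A → F),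
      ∀ m m' : Fin B → F, hammingDist m m' ≤ 1 →
        D (fun a => Γ (s, a) ⬝ᵥ m)
          (fun i ℓ => ∑ a : Fin A, ξ i ℓ a * (Γ (u ℓ, a) ⬝ᵥ m'))
          = fun a => Γ (s, a) ⬝ᵥ m' := by
  classical
  -- every entry of Γ is nonzero (1×1 submatrix invertible)
  have hne : ∀ (p : Fin n × Fin A) (j : Fin B), Γ p j ≠ 0 := by
    intro p j
    have h := hsub 1 (fun _ => p) (fun _ => j)
      (Function.injective_of_subsingleton _) (Function.injective_of_subsingleton _)
    simpa [Matrix.det_fin_one] using h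
  refine ⟨fun x y =>
    if h : ∃ p : F × Fin B, p.1 ≠ 0 ∧ ∀ i : Fin 2,
        (∑ ℓ : Fin k, y i ℓ) - x (Fin.castLE hA i) = p.1 * Γ (s, Fin.castLE hA i) p.2
    then fun a => x a + h.choose.1 * Γ (s, a) h.choose.2
    else x, ?_⟩
  intro m m' hd
  beta_reduce
  -- the sums of received symbols give the first two coordinates of Γ_s m'
  have hsum : ∀ i : Fin 2,
      (∑ ℓ : Fin k, ∑ a : Fin A, ξ i ℓ a * (Γ (u ℓ, a) ⬝ᵥ m'))
        = Γ (s, Fin.castLE hA i) ⬝ᵥ m' := by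
    intro i
    have h1 : (∑ ℓ : Fin k, ∑ a : Fin A, ξ i ℓ a * (Γ (u ℓ, a) ⬝ᵥ m'))
        = ∑ j, (∑ ℓ : Fin k, ∑ a : Fin A, ξ i ℓ a * Γ (u ℓ, a) j) * m' j := by
      calc (∑ ℓ : Fin k, ∑ a : Fin A, ξ i ℓ a * (Γ (u ℓ, a) ⬝ᵥ m'))
          = ∑ ℓ : Fin k, ∑ a : Fin A, ∑ j, ξ i ℓ a * Γ (u ℓ, a) j * m' j :=
            Finset.sum_congr rfl fun ℓ _ => Finset.sum_congr rfl fun a _ => by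
              simp [dotProduct, Finset.mul_sum, mul_assoc]
        _ = ∑ ℓ : Fin k, ∑ j, ∑ a : Fin A, ξ i ℓ a * Γ (u ℓ, a) j * m' j :=
            Finset.sum_congr rfl fun ℓ _ => Finset.sum_comm
        _ = ∑ j, ∑ ℓ : Fin k, ∑ a : Fin A, ξ i ℓ a * Γ (u ℓ, a) j * m' j :=
            Finset.sum_comm
        _ = ∑ j, (∑ ℓ : Fin k, ∑ a : Fin A, ξ i ℓ a * Γ (u ℓ, a) j) * m' j := by
            refine Finset.sum_congr rfl fun j _ => ?_
            simp [Finset.sum_mul]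
    rw [h1]
    simp only [hξ i, dotProduct]
  by_cases hmm : m = m'
  · subst hmm
    rw [dif_neg]
    rintro ⟨⟨c, j⟩, hc, hδ⟩
    have h0 := hδ 0
    rw [hsum 0] at h0
    simp only [sub_self] at h0
    rcases mul_eq_zero.mp h0.symm with h | h
    · exact hc h
    · exact hne _ j h
  · -- m and m' differ in exactly one coordinate j₀
    have hcard : (Finset.univ.filter fun j => m j ≠ m' j).card = 1 := by
      have h1 : (Finset.univ.filter fun j => m j ≠ m' j).card ≤ 1 := by
        simpa [hammingDist] using hd
      have h2 : (Finset.univ.filter fun j => m j ≠ m' j).Nonempty := by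
        by_contra h
        rw [Finset.not_nonempty_iff_eq_empty, Finset.filter_eq_empty_iff] at h
        exact hmm (funext fun j => by
          have := h (Finset.mem_univ j); simpa using this)
      have h3 := Finset.card_pos.mpr h2
      omega
    obtain ⟨j₀, hj₀⟩ := Finset.card_eq_one.mp hcard
    have hmem : ∀ j : Fin B, m j ≠ m' j ↔ j = j₀ := fun j => by
      rw [← Finset.mem_singleton, ← hj₀, Finset.mem_filter]
      simp
    set c₀ := m' j₀ - m j₀ with hc₀def
    have hc₀ : c₀ ≠ 0 := sub_ne_zero.mpr (Ne.symm ((hmem j₀).mpr rfl))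
    -- key: Γ_p m' = Γ_p m + c₀ · Γ_p j₀
    have hkey : ∀ p : Fin n × Fin A, Γ p ⬝ᵥ m' = Γ p ⬝ᵥ m + c₀ * Γ p j₀ := by
      intro p
      have h5 : Γ p ⬝ᵥ m' - Γ p ⬝ᵥ m = ∑ j, Γ p j * (m' j - m j) := by
        simp [dotProduct, mul_sub, Finset.sum_sub_distrib]
      have h4 : (∑ j, Γ p j * (m' j - m j)) = Γ p j₀ * (m' j₀ - m j₀) := by
        refine Finset.sum_eq_single j₀ (fun j _ hj => ?_)
          (fun h => absurd (Finset.mem_univ _) h)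
        have h6 : m j = m' j := by
          by_contra hne'
          exact hj ((hmem j).mp hne')
        rw [h6]; ring
      have h7 := h5.trans h4
      rw [hc₀def]
      linear_combination h7
    -- any valid witness decodes correctly
    have main : ∀ (c : F) (j : Fin B), c ≠ 0 →
        (∀ i : Fin 2,
          (∑ ℓ : Fin k, ∑ a : Fin A, ξ i ℓ a * (Γ (u ℓ, a) ⬝ᵥ m'))
            - (Γ (s, Fin.castLE hA i) ⬝ᵥ m) = c * Γ (s, Fin.castLE hA i) j) →
        (fun a => (Γ (s, a) ⬝ᵥ m) + c * Γ (s, a) j) = fun a => Γ (s, a) ⬝ᵥ m' := by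
      intro c j hc hspec
      have e : ∀ i : Fin 2,
          c * Γ (s, Fin.castLE hA i) j = c₀ * Γ (s, Fin.castLE hA i) j₀ := by
        intro i
        have h8 := hspec i
        rw [hsum i, hkey (s, Fin.castLE hA i)] at h8
        linear_combination -h8
      have hjj : j = j₀ := by
        by_contra hjj
        have hri : Function.Injective
            (fun i : Fin 2 => ((s, Fin.castLE hA i) : Fin n × Fin A)) := by
          intro a b hab
          have := congrArg Prod.snd hab
          exact Fin.castLE_injective hA this
        have hci : Function.Injective ![j, j₀] := by
          intro a b hab
          fin_cases a <;> fin_cases b <;>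
            simp only [Matrix.cons_val_zero, Matrix.cons_val_one, Matrix.head_cons,
              Matrix.cons_val_fin_one, Fin.mk_zero, Fin.mk_one, Fin.isValue] at hab ⊢
          · exact absurd hab hjj
          · exact absurd hab.symm hjj
        have hdet := hsub 2 (fun i => (s, Fin.castLE hA i)) ![j, j₀] hri hci
        apply hdet
        rw [Matrix.det_fin_two]
        simp only [Matrix.submatrix_apply, Matrix.cons_val_zero, Matrix.cons_val_one,
          Matrix.head_cons]
        have e0 := e 0
        have e1 := e 1
        have hT : c * (c₀ * (Γ (s, Fin.castLE hA 0) j * Γ (s, Fin.castLE hA 1) j₀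
            - Γ (s, Fin.castLE hA 0) j₀ * Γ (s, Fin.castLE hA 1) j)) = 0 := by
          linear_combination (c₀ * Γ (s, Fin.castLE hA 1) j₀) * e0
            - (c₀ * Γ (s, Fin.castLE hA 0) j₀) * e1
        rcases mul_eq_zero.mp hT with h | h
        · exact absurd h hc
        rcases mul_eq_zero.mp h with h | h
        · exact absurd h hc₀
        linear_combination h
      have hcc : c = c₀ := by
        have e0 := e 0
        rw [hjj] at e0
        exact mul_right_cancel₀ (hne _ j₀) e0
      funext a
      rw [hkey (s, a), hcc, hjj]
    have hpos : ∃ p : F × Fin B, p.1 ≠ 0 ∧ ∀ i : Fin 2,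
        (∑ ℓ : Fin k, ∑ a : Fin A, ξ i ℓ a * (Γ (u ℓ, a) ⬝ᵥ m'))
          - (Γ (s, Fin.castLE hA i) ⬝ᵥ m) = p.1 * Γ (s, Fin.castLE hA i) p.2 := by
      refine ⟨(c₀, j₀), hc₀, fun i => ?_⟩
      rw [hsum i, hkey (s, Fin.castLE hA i)]
      ring
    rw [dif_pos hpos]
    exact main hpos.choose.1 hpos.choose.2 hpos.choose_spec.1 hpos.choose_spec.2
end

section
/- (Existence of good parameters via Schwartz–Zippel.) For fixed positive integers n, d, T, there exists a prime power q and vectors ψ_1,...,ψ_n ∈ F_q^d and scalars η_{ℓ,p} ∈ F_q (ℓ ∈ [n], p ∈ [T]) such that: (a) every d×d submatrix of the d×n matrix [ψ_1 ... ψ_n] is invertible, and (b) for all triples of distinct indices (u_1, u_2, s) and all pairs (p,i,j) ≠ (p',i',j') with 1 ≤ i ≤ j ≤ d, 1 ≤ i' ≤ j' ≤ d, the inequality η_{u_1,p} γ^{(u_1,s)}_{i,j} η_{u_2,p'} γ^{(u_2,s)}_{i',j'} ≠ η_{u_1,p'} γ^{(u_1,s)}_{i',j'} η_{u_2,p} γ^{(u_2,s)}_{i,j}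 holds, where γ^{(u,s)}_{i,j} = ψ_{u,i}ψ_{s,j} + ψ_{u,j}ψ_{s,i} if i ≠ j and ψ_{u,i}ψ_{s,i} if i = j. -/
/-- The quantity γ^{(u,s)}_{i,j} of the product-matrix construction. -/
def gammaPM {F : Type} [Field F] {n d : ℕ} (ψ : Fin n → Fin d → F)
    (u s : Fin n) (i j : Fin d) : F :=
  if i = j then ψ u i * ψ s i else ψ u i * ψ s j + ψ u j * ψ s i

/-- Conditions (a) and (b) of the product-matrix construction. -/
def GoodParams (F : Type) [Field F] (n d T : ℕ)
    (ψ : Fin n → Fin d → F) (η : Fin n → Fin T → F) : Prop :=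
  (∀ cols : Fin d → Fin n, Function.Injective cols →
      (Matrix.of fun i j : Fin d => ψ (cols j) i).det ≠ 0) ∧
  (∀ u₁ u₂ s : Fin n, u₁ ≠ u₂ → u₁ ≠ s → u₂ ≠ s →
    ∀ (p p' : Fin T) (i j i' j' : Fin d), i ≤ j → i' ≤ j' →
      (p, i, j) ≠ (p', i', j') →
      η u₁ p * gammaPM ψ u₁ s i j * (η u₂ p' * gammaPM ψ u₂ s i' j') ≠
        η u₁ p' * gammaPM ψ u₁ s i' j' * (η u₂ p * gammaPM ψ u₂ s i j))

namespace SZaux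

open MvPolynomial

/-! ### Integer power-of-three lemmas -/

lemma pow3_inj {a b : ℕ} (h : (3:ℤ)^a = 3^b) : a = b := by
  have h' : ((3^a : ℕ) : ℤ) = ((3^b : ℕ) : ℤ) := by push_cast; exact h
  exact Nat.pow_right_injective (by norm_num) (Nat.cast_injective h')

lemma L1 {a b c : ℕ} (h : a < b) : (3:ℤ)^a + 3^b ≠ 2 * 3^c := by
  intro heq
  rcases lt_trichotomy a c with hac | rfl | hca
  · have hb : (3:ℤ)^a * 3^(b-a) = 3^b := pow_mul_pow_sub 3 h.le
    have hc : (3:ℤ)^a * 3^(c-a) = 3^c := pow_mul_pow_sub 3 hac.le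
    have key2 : (3:ℤ)^a * (1 + 3^(b-a)) = 3^a * (2 * 3^(c-a)) := by
      rw [mul_add, mul_one, hb, show (3:ℤ)^a*(2*3^(c-a)) = 2*(3^a*3^(c-a)) by ring, hc]
      exact heq
    have key := mul_left_cancel₀ (a := (3:ℤ)^a) (by positivity) key2
    obtain ⟨k, hk⟩ : (3:ℤ) ∣ 3^(b-a) := dvd_pow_self 3 (by omega)
    obtain ⟨m, hm⟩ : (3:ℤ) ∣ 3^(c-a) := dvd_pow_self 3 (by omega)
    omega
  · have : (3:ℤ)^b = 3^a := by omega
    exact absurd (pow3_inj this) (by omega)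
  · have ha : (3:ℤ)^c * 3^(a-c) = 3^a := pow_mul_pow_sub 3 hca.le
    have hb : (3:ℤ)^c * 3^(b-c) = 3^b := pow_mul_pow_sub 3 (hca.trans h).le
    have key2 : (3:ℤ)^c * (3^(a-c) + 3^(b-c)) = 3^c * 2 := by
      rw [mul_add, ha, hb, mul_comm ((3:ℤ)^c) 2]; exact heq
    have key := mul_left_cancel₀ (a := (3:ℤ)^c) (by positivity) key2
    have h1 : (3:ℤ) ≤ 3^(a-c) := by
      calc (3:ℤ) = 3^1 := by norm_num
      _ ≤ 3^(a-c) := pow_le_pow_right₀ (by norm_num) (by omega)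
    have h2 : (0:ℤ) < 3^(b-c) := by positivity
    omega

lemma L2 {a b c d : ℕ} (h1 : a < b) (h2 : c < d) (h : (3:ℤ)^a+3^b = 3^c+3^d) :
    a = c ∧ b = d := by
  rcases lt_trichotomy a c with hac | rfl | hca
  · exfalso
    have hb : (3:ℤ)^a * 3^(b-a) = 3^b := pow_mul_pow_sub 3 h1.le
    have hc : (3:ℤ)^a * 3^(c-a) = 3^c := pow_mul_pow_sub 3 hac.le
    have hd : (3:ℤ)^a * 3^(d-a) = 3^d := pow_mul_pow_sub 3 (hac.trans h2).le
    have key2 : (3:ℤ)^a * (1 + 3^(b-a)) = 3^a * (3^(c-a) + 3^(d-a)) := by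
      rw [mul_add, mul_one, hb, mul_add, hc, hd]; exact h
    have key := mul_left_cancel₀ (a := (3:ℤ)^a) (by positivity) key2
    obtain ⟨k, hk⟩ : (3:ℤ) ∣ 3^(b-a) := dvd_pow_self 3 (by omega)
    obtain ⟨m, hm⟩ : (3:ℤ) ∣ 3^(c-a) := dvd_pow_self 3 (by omega)
    obtain ⟨l, hl⟩ : (3:ℤ) ∣ 3^(d-a) := dvd_pow_self 3 (by omega)
    omega
  · have : (3:ℤ)^b = 3^d := by omega
    exact ⟨rfl, pow3_inj this⟩
  · exfalso
    have ha : (3:ℤ)^c * 3^(a-c) = 3^a := pow_mul_pow_sub 3 hca.le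
    have hb : (3:ℤ)^c * 3^(b-c) = 3^b := pow_mul_pow_sub 3 (hca.trans h1).le
    have hd : (3:ℤ)^c * 3^(d-c) = 3^d := pow_mul_pow_sub 3 h2.le
    have key2 : (3:ℤ)^c * (3^(a-c) + 3^(b-c)) = 3^c * (1 + 3^(d-c)) := by
      rw [mul_add, ha, hb, mul_add, mul_one, hd]; exact h
    have key := mul_left_cancel₀ (a := (3:ℤ)^c) (by positivity) key2
    obtain ⟨k, hk⟩ : (3:ℤ) ∣ 3^(a-c) := dvd_pow_self 3 (by omega)
    obtain ⟨m, hm⟩ : (3:ℤ) ∣ 3^(b-c) := dvd_pow_self 3 (by omega)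
    obtain ⟨l, hl⟩ : (3:ℤ) ∣ 3^(d-c) := dvd_pow_self 3 (by omega)
    omega

/-! ### Polynomial set-up -/

abbrev Vix (n d T : ℕ) := (Fin n × Fin d) ⊕ (Fin n × Fin T)

abbrev TTix (n d T : ℕ) :=
  Fin n × Fin n × Fin n × Fin T × Fin T × Fin d × Fin d × Fin d × Fin d

variable {n d T : ℕ}

def gZ {R : Type} [CommRing R] {n d : ℕ} (ψ : Fin n → Fin d → R) (u s : Fin n) (i j : Fin d) : R :=
  if i = j then ψ u i * ψ s i else ψ u i * ψ s j + ψ u j * ψ s i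

def bE {R : Type} [CommRing R] {n d T : ℕ} (ψ : Fin n → Fin d → R) (η : Fin n → Fin T → R)
    (u₁ u₂ s : Fin n) (p p' : Fin T) (i j i' j' : Fin d) : R :=
  η u₁ p * gZ ψ u₁ s i j * (η u₂ p' * gZ ψ u₂ s i' j') -
    η u₁ p' * gZ ψ u₁ s i' j' * (η u₂ p * gZ ψ u₂ s i j)

def dE {R : Type} [CommRing R] {n d : ℕ} (ψ : Fin n → Fin d → R) (cols : Fin d → Fin n) : R :=
  (Matrix.of fun i j : Fin d => ψ (cols j) i).det

lemma map_gZ {R S : Type} [CommRing R] [CommRing S] (f : R →+* S) (ψ : Fin n → Fin d → R)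
    (u s : Fin n) (i j : Fin d) :
    f (gZ ψ u s i j) = gZ (fun a b => f (ψ a b)) u s i j := by
  simp [gZ, apply_ite f]

lemma map_bE {R S : Type} [CommRing R] [CommRing S] (f : R →+* S) (ψ : Fin n → Fin d → R)
    (η : Fin n → Fin T → R) (u₁ u₂ s : Fin n) (p p' : Fin T) (i j i' j' : Fin d) :
    f (bE ψ η u₁ u₂ s p p' i j i' j') =
      bE (fun a b => f (ψ a b)) (fun a b => f (η a b)) u₁ u₂ s p p' i j i' j' := by
  simp [bE, map_gZ]

lemma map_dE {R S : Type} [CommRing R] [CommRing S] (f : R →+* S) (ψ : Fin n → Fin d → R)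
    (cols : Fin d → Fin n) :
    f (dE ψ cols) = dE (fun a b => f (ψ a b)) cols := by
  rw [dE, dE, RingHom.map_det]; rfl

noncomputable def ΨX (n d T : ℕ) : Fin n → Fin d → MvPolynomial (Vix n d T) ℤ :=
  fun u i => X (Sum.inl (u, i))

noncomputable def HX (n d T : ℕ) : Fin n → Fin T → MvPolynomial (Vix n d T) ℤ :=
  fun u p => X (Sum.inr (u, p))

/-- The conditions indexing the (b)-polynomials. -/
def Cnd (t : TTix n d T) : Prop :=
  match t with
  | (u₁, u₂, s, p, p', i, j, i', j') =>
      u₁ ≠ u₂ ∧ u₁ ≠ s ∧ u₂ ≠ s ∧ i ≤ j ∧ i' ≤ j' ∧ (p, i, j) ≠ (p', i', j')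

open Classical in
noncomputable def PA (n d T : ℕ) (cols : Fin d → Fin n) : MvPolynomial (Vix n d T) ℤ :=
  if Function.Injective cols then dE (ΨX n d T) cols else 1

open Classical in
noncomputable def PB (n d T : ℕ) (t : TTix n d T) : MvPolynomial (Vix n d T) ℤ :=
  match t with
  | (u₁, u₂, s, p, p', i, j, i', j') =>
      if Cnd (n := n) (d := d) (T := T) (u₁, u₂, s, p, p', i, j, i', j') then
        bE (ΨX n d T) (HX n d T) u₁ u₂ s p p' i j i' j'
      else 1

/-! ### Non-vanishing of the individual polynomials -/

lemma dE_ne (cols : Fin d → Fin n) (hinj : Function.Injective cols) :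
    dE (ΨX n d T) cols ≠ 0 := by
  intro h0
  classical
  set y : Vix n d T → ℤ := fun v => match v with
    | .inl (u, i) => if ∃ j, cols j = u ∧ i = j then (1:ℤ) else 0
    | .inr _ => 0 with hy
  have h1 := congrArg (eval y) h0
  rw [map_zero, map_dE] at h1
  have h2 : dE (fun a b => (eval y) (ΨX n d T a b)) cols = 1 := by
    rw [dE]
    have hM : (Matrix.of fun i j : Fin d => (eval y) (ΨX n d T (cols j) i)) = 1 := by
      ext i j
      simp only [Matrix.of_apply, ΨX, eval_X, hy, Matrix.one_apply]
      by_cases hij : i = j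
      · subst hij; rw [if_pos ⟨i, rfl, rfl⟩, if_pos rfl]
      · rw [if_neg, if_neg hij]
        rintro ⟨j', hj', rfl⟩
        exact hij (hinj hj')
    rw [hM, Matrix.det_one]
  rw [h2] at h1
  norm_num at h1

lemma bE_ne (u₁ u₂ s : Fin n) (p p' : Fin T) (i j i' j' : Fin d)
    (h12 : u₁ ≠ u₂) (h1s : u₁ ≠ s) (h2s : u₂ ≠ s) (hij : i ≤ j) (hij' : i' ≤ j')
    (hne : (p, i, j) ≠ (p', i', j')) :
    bE (ΨX n d T) (HX n d T) u₁ u₂ s p p' i j i' j' ≠ 0 := by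
  classical
  intro h0
  by_cases hpp : p = p'
  · subst hpp
    have hne' : ¬ (i = i' ∧ j = j') := fun ⟨h1, h2⟩ => hne (by rw [h1, h2])
    set ψy : Fin n → Fin d → ℤ := fun u k => if u = u₂ then (3:ℤ)^(k:ℕ) else 1 with hψy
    set y : Vix n d T → ℤ := fun v => match v with
      | .inl (u, k) => ψy u k
      | .inr _ => 1 with hy
    have h1 := congrArg (eval y) h0
    rw [map_zero, map_bE] at h1
    have hψ : (fun a b => (eval y) (ΨX n d T a b)) = ψy := by
      funext a b; simp [ΨX, hy]
    have hη : (fun (a : Fin n) (b : Fin T) => (eval y) (HX n d T a b)) = fun _ _ => (1:ℤ) := by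
      funext a b; simp [HX, hy]
    rw [hψ, hη] at h1
    have g1 : ∀ a b : Fin d, gZ ψy u₁ s a b = if a = b then 1 else 2 := by
      intro a b
      by_cases hab : a = b <;> simp [gZ, hψy, h12, Ne.symm h2s, hab]
    have g2 : ∀ a b : Fin d, gZ ψy u₂ s a b =
        if a = b then (3:ℤ)^(a:ℕ) else (3:ℤ)^(a:ℕ) + 3^(b:ℕ) := by
      intro a b
      by_cases hab : a = b <;> simp [gZ, hψy, Ne.symm h2s, hab]
    rw [bE, g1, g1, g2, g2] at h1
    simp only [one_mul] at h1
    rcases lt_or_eq_of_le hij with hlt | rfl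
    · rcases lt_or_eq_of_le hij' with hlt' | rfl
      · simp only [if_neg hlt.ne, if_neg hlt'.ne] at h1
        have heq : (3:ℤ)^(i':ℕ) + 3^(j':ℕ) = 3^(i:ℕ) + 3^(j:ℕ) := by linarith
        obtain ⟨hi, hj⟩ := L2 (by exact_mod_cast hlt') (by exact_mod_cast hlt) heq
        exact hne' ⟨(Fin.val_injective hi).symm, (Fin.val_injective hj).symm⟩
      · simp only [if_neg hlt.ne, eq_self_iff_true, if_true] at h1
        exact L1 (c := (i':ℕ)) (show (i:ℕ) < (j:ℕ) from hlt) (by linarith)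
    · rcases lt_or_eq_of_le hij' with hlt' | rfl
      · simp only [if_neg hlt'.ne, eq_self_iff_true, if_true, one_mul] at h1
        exact L1 (c := (i:ℕ)) (show (i':ℕ) < (j':ℕ) from hlt') (by linarith)
      · simp only [eq_self_iff_true, if_true, one_mul] at h1
        have : (3:ℤ)^(i':ℕ) = 3^(i:ℕ) := by linarith
        have hii : i' = i := Fin.val_injective (pow3_inj this)
        exact hne' ⟨hii.symm, hii.symm⟩
  · set ηy : Fin n → Fin T → ℤ := fun u q => if u = u₁ ∧ q = p' then 2 else 1 with hηy
    set y : Vix n d T → ℤ := fun v => match v with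
      | .inl _ => 1
      | .inr (u, q) => ηy u q with hy
    have h1 := congrArg (eval y) h0
    rw [map_zero, map_bE] at h1
    have hψ : (fun (a : Fin n) (b : Fin d) => (eval y) (ΨX n d T a b)) = fun _ _ => (1:ℤ) := by
      funext a b; simp [ΨX, hy]
    have hη : (fun (a : Fin n) (b : Fin T) => (eval y) (HX n d T a b)) = ηy := by
      funext a b; simp [HX, hy]
    rw [hψ, hη] at h1
    have g1 : ∀ (u : Fin n) (a b : Fin d), gZ (fun _ _ => (1:ℤ)) u s a b =
        if a = b then 1 else 2 := by
      intro u a b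
      by_cases hab : a = b <;> simp [gZ, hab]
    rw [bE, g1, g1, g1, g1] at h1
    have e1 : ηy u₁ p = 1 := by simp [hηy, hpp]
    have e2 : ηy u₂ p' = 1 := by simp [hηy, Ne.symm h12]
    have e3 : ηy u₁ p' = 2 := by simp [hηy]
    have e4 : ηy u₂ p = 1 := by simp [hηy, Ne.symm h12]
    rw [e1, e2, e3, e4] at h1
    by_cases hab : i = j <;> by_cases hab' : i' = j' <;>
      simp [hab, hab'] at h1 <;> linarith

lemma PA_ne (cols : Fin d → Fin n) : PA n d T cols ≠ 0 := by
  classical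
  rw [PA]
  split
  · exact dE_ne cols ‹_›
  · exact one_ne_zero

lemma PB_ne (t : TTix n d T) : PB n d T t ≠ 0 := by
  classical
  obtain ⟨u₁, u₂, s, p, p', i, j, i', j'⟩ := t
  show (if Cnd (n := n) (d := d) (T := T) (u₁, u₂, s, p, p', i, j, i', j') then
        bE (ΨX n d T) (HX n d T) u₁ u₂ s p p' i j i' j'
      else 1) ≠ 0
  split
  · next hc =>
    obtain ⟨h12, h1s, h2s, hij, hij', hne⟩ := hc
    exact bE_ne u₁ u₂ s p p' i j i' j' h12 h1s h2s hij hij' hne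
  · exact one_ne_zero

end SZaux

/-- Existence of good parameters via Schwartz–Zippel: for any n, d, T there is a
finite field and an assignment of the ψ's and η's satisfying conditions (a) and (b). -/
theorem stmt17 (n d T : ℕ) :
    ∃ (F : Type) (instF : Field F) (instFin : Fintype F)
      (ψ : Fin n → Fin d → F) (η : Fin n → Fin T → F),
      @GoodParams F instF n d T ψ η := by
  classical
  open SZaux MvPolynomial in
  -- the master polynomial
  set P : MvPolynomial (Vix n d T) ℤ :=
    (∏ cols : Fin d → Fin n, PA n d T cols) * (∏ t : TTix n d T, PB n d T t) with hP
  have hPne : P ≠ 0 := by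
    apply mul_ne_zero
    · exact Finset.prod_ne_zero_iff.mpr fun cols _ => PA_ne cols
    · exact Finset.prod_ne_zero_iff.mpr fun t _ => PB_ne t
  -- a common non-root
  obtain ⟨x, hx⟩ : ∃ x : Vix n d T → ℤ, eval x P ≠ 0 := by
    by_contra h
    push_neg at h
    exact hPne (MvPolynomial.funext fun y => by rw [h y, map_zero])
  set xψ : Fin n → Fin d → ℤ := fun u i => x (Sum.inl (u, i)) with hxψ
  set xη : Fin n → Fin T → ℤ := fun u p => x (Sum.inr (u, p)) with hxη
  have hevΨ : (fun a b => (eval x) (ΨX n d T a b)) = xψ := by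
    funext a b; simp [ΨX, hxψ]
  have hevH : (fun a b => (eval x) (HX n d T a b)) = xη := by
    funext a b; simp [HX, hxη]
  have hprod : (∏ cols : Fin d → Fin n, eval x (PA n d T cols)) *
      (∏ t : TTix n d T, eval x (PB n d T t)) ≠ 0 := by
    rw [← map_prod, ← map_prod, ← map_mul]; exact hx
  have hAfac : ∀ cols : Fin d → Fin n, eval x (PA n d T cols) ≠ 0 := fun cols h0 =>
    hprod (mul_eq_zero_of_left (Finset.prod_eq_zero (Finset.mem_univ cols) h0) _)
  have hBfac : ∀ t : TTix n d T, eval x (PB n d T t) ≠ 0 := fun t h0 =>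
    hprod (mul_eq_zero_of_right _ (Finset.prod_eq_zero (Finset.mem_univ t) h0))
  have hPAval : ∀ cols : Fin d → Fin n, Function.Injective cols →
      eval x (PA n d T cols) = dE xψ cols := by
    intro cols hinj
    rw [PA, if_pos hinj, map_dE, hevΨ]
  have hPBval : ∀ u₁ u₂ s : Fin n, ∀ p p' : Fin T, ∀ i j i' j' : Fin d,
      Cnd (n := n) (d := d) (T := T) (u₁, u₂, s, p, p', i, j, i', j') →
      eval x (PB n d T (u₁, u₂, s, p, p', i, j, i', j')) =
        bE xψ xη u₁ u₂ s p p' i j i' j' := by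
    intro u₁ u₂ s p p' i j i' j' hc
    show eval x (if Cnd (n := n) (d := d) (T := T) (u₁, u₂, s, p, p', i, j, i', j') then
        bE (ΨX n d T) (HX n d T) u₁ u₂ s p p' i j i' j' else 1) = _
    rw [if_pos hc, map_bE, hevΨ, hevH]
  -- the bound and a large prime
  set M : ℕ := (Finset.univ.sup fun cols : Fin d → Fin n => (eval x (PA n d T cols)).natAbs) ⊔
      (Finset.univ.sup fun t : TTix n d T => (eval x (PB n d T t)).natAbs) with hM
  obtain ⟨q, hqM, hq⟩ := Nat.exists_infinite_primes (M + 1)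
  haveI : Fact q.Prime := ⟨hq⟩
  haveI : NeZero q := ⟨hq.pos.ne'⟩
  have castne : ∀ v : ℤ, v ≠ 0 → v.natAbs ≤ M → (v : ZMod q) ≠ 0 := by
    intro v hv hle h0
    rw [ZMod.intCast_zmod_eq_zero_iff_dvd] at h0
    have h1 : q ∣ v.natAbs := Int.natCast_dvd_natCast.mp (Int.dvd_natAbs.mpr h0)
    have h2 : q ≤ v.natAbs := Nat.le_of_dvd (Int.natAbs_pos.mpr hv) h1
    omega
  set ψF : Fin n → Fin d → ZMod q := fun u i => ((xψ u i : ℤ) : ZMod q) with hψF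
  set ηF : Fin n → Fin T → ZMod q := fun u p => ((xη u p : ℤ) : ZMod q) with hηF
  refine ⟨ZMod q, inferInstance, inferInstance, ψF, ηF, ?_, ?_⟩
  · -- condition (a)
    intro cols hinj
    have hcast : (Matrix.of fun i j : Fin d => ψF (cols j) i).det =
        ((dE xψ cols : ℤ) : ZMod q) := by
      have := map_dE (Int.castRingHom (ZMod q)) xψ cols
      rw [show ((dE xψ cols : ℤ) : ZMod q) = (Int.castRingHom (ZMod q)) (dE xψ cols) from rfl,
        this]
      rfl
    rw [hcast]
    apply castne
    · rw [← hPAval cols hinj]; exact hAfac cols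
    · calc (dE xψ cols).natAbs = (eval x (PA n d T cols)).natAbs := by
            rw [hPAval cols hinj]
      _ ≤ Finset.univ.sup fun cols : Fin d → Fin n => (eval x (PA n d T cols)).natAbs :=
            Finset.le_sup (f := fun cols : Fin d → Fin n => (eval x (PA n d T cols)).natAbs)
              (Finset.mem_univ cols)
      _ ≤ M := le_sup_left
  · -- condition (b)
    intro u₁ u₂ s h12 h1s h2s p p' i j i' j' hij hij' hne
    have hc : Cnd (n := n) (d := d) (T := T) (u₁, u₂, s, p, p', i, j, i', j') :=
      ⟨h12, h1s, h2s, hij, hij', hne⟩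
    apply sub_ne_zero.mp
    show bE ψF ηF u₁ u₂ s p p' i j i' j' ≠ 0
    have hcast : bE ψF ηF u₁ u₂ s p p' i j i' j' =
        ((bE xψ xη u₁ u₂ s p p' i j i' j' : ℤ) : ZMod q) := by
      rw [show ((bE xψ xη u₁ u₂ s p p' i j i' j' : ℤ) : ZMod q) =
        (Int.castRingHom (ZMod q)) (bE xψ xη u₁ u₂ s p p' i j i' j') from rfl,
        map_bE]
      rfl
    rw [hcast]
    apply castne
    · rw [← hPBval u₁ u₂ s p p' i j i' j' hc]
      exact hBfac _
    · calc (bE xψ xη u₁ u₂ s p p' i j i' j').natAbs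
          = (eval x (PB n d T (u₁, u₂, s, p, p', i, j, i', j'))).natAbs := by
            rw [hPBval u₁ u₂ s p p' i j i' j' hc]
      _ ≤ Finset.univ.sup fun t : TTix n d T => (eval x (PB n d T t)).natAbs :=
            Finset.le_sup (f := fun t : TTix n d T => (eval x (PB n d T t)).natAbs)
              (Finset.mem_univ (u₁, u₂, s, p, p', i, j, i', j'))
      _ ≤ M := le_sup_right
end
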